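/- Let Q be an axis-parallel square subdivided into k² congruent axis-parallel square cells (a k × k grid of cells), where k is a positive integer. For any two cells σ and τ of this grid, the number of cells of the grid whose interior has nonempty intersection with the convex hull of σ ∪ τ is at most 4k. -/

import Mathlib

noncomputable section

/-- Points live in the Euclidean plane. -/
abbrev Pt := EuclideanSpace ℝ (Fin 2)

/-- The `(i,j)`-th closed cell of side `s / k` in the subdivision of the axis-parallel
square with bottom-left corner `(x₀, y₀)` and side `s` into `k²` congruent cells. -/
def cell (x₀ y₀ s : ℝ) (k : ℕ) (i j : Fin k) : Set Pt :=
  {p | x₀ + ((i : ℕ) : ℝ) * (s / k) ≤ p 0 ∧ p 0 ≤ x₀ + (((i : ℕ) : ℝ) + 1) * (s / k) ∧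
       y₀ + ((j : ℕ) : ℝ) * (s / k) ≤ p 1 ∧ p 1 ≤ y₀ + (((j : ℕ) : ℝ) + 1) * (s / k)}

/-!
In grid units, the interior of the cell `(a, b)` meets the hull of `σ ∪ τ` only if some point `z`
of the segment joining the lower-left corners of `σ` and `τ` has `|a - z.1| < 1` and
`|b - z.2| < 1`. Say the segment is at most as steep as the diagonal (otherwise swap the axes).
Two such cells in one column `a` come from points of the segment whose abscissae differ by less
than `2`, hence whose ordinates differ by less than `2`, so their rows differ by less than `4`:
each of the `k` columns holds at most four of them.
-/

open Set

lemma EuclideanSpace.proj_surjective {𝕜 ι : Type*} [RCLike 𝕜] [DecidableEq ι] (i : ι) :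
    Function.Surjective (EuclideanSpace.proj (𝕜 := 𝕜) i) :=
  fun r => ⟨EuclideanSpace.single i r, by simp⟩

lemma cell_eq_preimage (x₀ y₀ s : ℝ) (k : ℕ) (i j : Fin k) :
    cell x₀ y₀ s k i j =
      EuclideanSpace.proj (0 : Fin 2) ⁻¹'
        Icc (x₀ + (i : ℕ) * (s / k)) (x₀ + ((i : ℕ) + 1) * (s / k)) ∩
      EuclideanSpace.proj (1 : Fin 2) ⁻¹'
        Icc (y₀ + (j : ℕ) * (s / k)) (y₀ + ((j : ℕ) + 1) * (s / k)) := by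
  ext p
  simp [cell, and_assoc]

lemma interior_cell (x₀ y₀ s : ℝ) (k : ℕ) (i j : Fin k) :
    interior (cell x₀ y₀ s k i j) =
      EuclideanSpace.proj (0 : Fin 2) ⁻¹'
        Ioo (x₀ + (i : ℕ) * (s / k)) (x₀ + ((i : ℕ) + 1) * (s / k)) ∩
      EuclideanSpace.proj (1 : Fin 2) ⁻¹'
        Ioo (y₀ + (j : ℕ) * (s / k)) (y₀ + ((j : ℕ) + 1) * (s / k)) := by
  rw [cell_eq_preimage, interior_inter,
    (EuclideanSpace.proj 0 : Pt →L[ℝ] ℝ).interior_preimage (EuclideanSpace.proj_surjective _),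
    (EuclideanSpace.proj 1 : Pt →L[ℝ] ℝ).interior_preimage (EuclideanSpace.proj_surjective _),
    interior_Icc, interior_Icc]

lemma convex_cell (x₀ y₀ s : ℝ) (k : ℕ) (i j : Fin k) : Convex ℝ (cell x₀ y₀ s k i j) := by
  rw [cell_eq_preimage]
  exact ((convex_Icc _ _).linear_preimage _).inter ((convex_Icc _ _).linear_preimage _)

lemma cell_nonempty {x₀ y₀ s : ℝ} {k : ℕ} (hw : 0 ≤ s / k) (i j : Fin k) :
    (cell x₀ y₀ s k i j).Nonempty :=
  ⟨!₂[x₀ + (i : ℕ) * (s / k), y₀ + (j : ℕ) * (s / k)], by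
    refine ⟨le_rfl, ?_, le_rfl, ?_⟩ <;> simp <;> linarith⟩

lemma abs_sub_lt_one_of_convex_combination_mem_Ioo {o w n m m' u u' a b : ℝ} (ha : 0 ≤ a)
    (hb : 0 ≤ b) (hab : a + b = 1) (hu : u ∈ Icc (o + m * w) (o + (m + 1) * w))
    (hu' : u' ∈ Icc (o + m' * w) (o + (m' + 1) * w))
    (hn : a * u + b * u' ∈ Ioo (o + n * w) (o + (n + 1) * w)) :
    |n - (a * m + b * m')| < 1 := by
  obtain ⟨hn₁, hn₂⟩ := hn
  have hw : 0 < w := by linarith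
  have hlo : o + (a * m + b * m') * w ≤ a * u + b * u' := by
    linear_combination mul_le_mul_of_nonneg_left hu.1 ha + mul_le_mul_of_nonneg_left hu'.1 hb -
      o * hab
  have hhi : a * u + b * u' ≤ o + (a * m + b * m' + 1) * w := by
    linear_combination mul_le_mul_of_nonneg_left hu.2 ha + mul_le_mul_of_nonneg_left hu'.2 hb +
      (o + w) * hab
  rw [abs_sub_lt_iff, sub_lt_iff_lt_add', sub_lt_iff_lt_add']
  exact ⟨lt_of_mul_lt_mul_right (by linarith) hw.le, lt_of_mul_lt_mul_right (by linarith) hw.le⟩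

def nearSegment (k : ℕ) (P P' : ℝ × ℝ) : Set (Fin k × Fin k) :=
  {c | ∃ z ∈ segment ℝ P P', |((c.1 : ℕ) : ℝ) - z.1| < 1 ∧ |((c.2 : ℕ) : ℝ) - z.2| < 1}

lemma mem_nearSegment_of_interior_inter_convexHull_nonempty {x₀ y₀ s : ℝ} {k : ℕ}
    {i j i' j' : Fin k} {c : Fin k × Fin k}
    (h : (interior (cell x₀ y₀ s k c.1 c.2) ∩
      convexHull ℝ (cell x₀ y₀ s k i j ∪ cell x₀ y₀ s k i' j')).Nonempty) :
    c ∈ nearSegment k ((i : ℕ), (j : ℕ)) ((i' : ℕ), (j' : ℕ)) := by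
  obtain ⟨z, hz, hzH⟩ := h
  rw [interior_cell] at hz
  have hw : 0 ≤ s / k := by linarith [hz.1.1.trans hz.1.2]
  rw [(convex_cell ..).convexHull_union (convex_cell ..) (cell_nonempty hw _ _)
    (cell_nonempty hw _ _), mem_convexJoin] at hzH
  obtain ⟨u, hu, u', hu', a, b, ha, hb, hab, rfl⟩ := hzH
  rw [cell_eq_preimage] at hu hu'
  refine ⟨a • _ + b • _, ⟨a, b, ha, hb, hab, rfl⟩, ?_, ?_⟩
  · exact abs_sub_lt_one_of_convex_combination_mem_Ioo ha hb hab hu.1 hu'.1 (by simpa using hz.1)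
  · exact abs_sub_lt_one_of_convex_combination_mem_Ioo ha hb hab hu.2 hu'.2 (by simpa using hz.2)

open Finset in
lemma Finset.card_le_of_forall_sub_lt {s : Finset ℤ} {n : ℕ} (h : ∀ a ∈ s, ∀ b ∈ s, a - b < n) :
    #s ≤ n := by
  rcases s.eq_empty_or_nonempty with rfl | hs
  · simp
  calc #s ≤ #(Ico (s.min' hs) (s.min' hs + n)) := card_le_card fun a ha =>
        mem_Ico.2 ⟨s.min'_le a ha, by linarith [h a ha _ (s.min'_mem hs)]⟩
    _ = n := by simp

open Finset in
lemma ncard_le_mul_card_of_sub_lt {α : Type*} [Fintype α] {m n : ℕ} (S : Set (α × Fin m))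
    (h : ∀ c ∈ S, ∀ c' ∈ S, c.1 = c'.1 → ((c.2 : ℕ) : ℤ) - (c'.2 : ℕ) < n) :
    S.ncard ≤ n * Fintype.card α := by
  classical
  rw [Set.ncard_eq_toFinset_card']
  refine (card_le_mul_card_image (f := Prod.fst) _ n fun a _ => ?_).trans
    (Nat.mul_le_mul_left _ (card_le_univ _))
  have hinj : Set.InjOn (fun c : α × Fin m => ((c.2 : ℕ) : ℤ)) ↑{c ∈ S.toFinset | c.1 = a} := by
    intro c hc c' hc' hcc'
    simp only [coe_filter, Set.mem_toFinset, Set.mem_ofPred_eq] at hc hc'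
    exact Prod.ext (hc.2.trans hc'.2.symm) (Fin.ext (Nat.cast_injective hcc'))
  rw [← card_image_of_injOn hinj]
  refine card_le_of_forall_sub_lt ?_
  simp only [Finset.forall_mem_image, mem_filter, Set.mem_toFinset]
  rintro c ⟨hc, rfl⟩ c' ⟨hc', hc'a⟩
  exact h c hc c' hc' hc'a.symm

lemma abs_snd_sub_le_of_mem_segment {P P' z z' : ℝ × ℝ} (hslope : |P'.2 - P.2| ≤ |P'.1 - P.1|)
    (hz : z ∈ segment ℝ P P') (hz' : z' ∈ segment ℝ P P') : |z.2 - z'.2| ≤ |z.1 - z'.1| := by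
  rw [segment_eq_image'] at hz hz'
  obtain ⟨t, -, rfl⟩ := hz
  obtain ⟨t', -, rfl⟩ := hz'
  simp only [Prod.fst_add, Prod.snd_add, Prod.smul_fst, Prod.smul_snd, Prod.fst_sub,
    Prod.snd_sub, smul_eq_mul, add_sub_add_left_eq_sub, ← sub_mul, abs_mul]
  gcongr

lemma sub_lt_four_of_mem_nearSegment {k : ℕ} {P P' : ℝ × ℝ}
    (hslope : |P'.2 - P.2| ≤ |P'.1 - P.1|) {c c' : Fin k × Fin k} (hc : c ∈ nearSegment k P P')
    (hc' : c' ∈ nearSegment k P P') (hcol : c.1 = c'.1) : ((c.2 : ℕ) : ℤ) - (c'.2 : ℕ) < 4 := by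
  obtain ⟨z, hz, hz₁, hz₂⟩ := hc
  obtain ⟨z', hz', hz₁', hz₂'⟩ := hc'
  rw [hcol] at hz₁
  rw [abs_sub_lt_iff] at hz₁ hz₁' hz₂ hz₂'
  have hx : |z.1 - z'.1| < 2 := abs_sub_lt_iff.2 ⟨by linarith, by linarith⟩
  have hy := abs_sub_lt_iff.1 ((abs_snd_sub_le_of_mem_segment hslope hz hz').trans_lt hx)
  exact_mod_cast (by linarith : ((c.2 : ℕ) : ℝ) - (c'.2 : ℕ) < 4)

lemma swap_mem_nearSegment {k : ℕ} {P P' : ℝ × ℝ} {c : Fin k × Fin k}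
    (hc : c ∈ nearSegment k P P') : c.swap ∈ nearSegment k P.swap P'.swap := by
  obtain ⟨_, ⟨a, b, ha, hb, hab, rfl⟩, h₁, h₂⟩ := hc
  exact ⟨(a • P + b • P').swap, ⟨a, b, ha, hb, hab, rfl⟩, h₂, h₁⟩

lemma ncard_nearSegment_le_of_abs_le {k : ℕ} {P P' : ℝ × ℝ}
    (hslope : |P'.2 - P.2| ≤ |P'.1 - P.1|) : (nearSegment k P P').ncard ≤ 4 * k := by
  simpa using ncard_le_mul_card_of_sub_lt _ fun c hc c' hc' =>
    sub_lt_four_of_mem_nearSegment hslope hc hc'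

lemma ncard_nearSegment_le (k : ℕ) (P P' : ℝ × ℝ) : (nearSegment k P P').ncard ≤ 4 * k := by
  rcases le_total |P'.2 - P.2| |P'.1 - P.1| with hslope | hslope
  · exact ncard_nearSegment_le_of_abs_le hslope
  calc (nearSegment k P P').ncard = (Prod.swap '' nearSegment k P P').ncard :=
        (Set.ncard_image_of_injective _ Prod.swap_injective).symm
    _ ≤ (nearSegment k P.swap P'.swap).ncard :=
        Set.ncard_le_ncard (image_subset_iff.2 fun _ => swap_mem_nearSegment) (toFinite _)
    _ ≤ 4 * k := ncard_nearSegment_le_of_abs_le hslope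

theorem hull_of_two_cells_meets_few_cells_general (x₀ y₀ s : ℝ)
    (k : ℕ) (i j i' j' : Fin k) :
    ({c : Fin k × Fin k |
        (interior (cell x₀ y₀ s k c.1 c.2) ∩
          convexHull ℝ (cell x₀ y₀ s k i j ∪ cell x₀ y₀ s k i' j')).Nonempty} :
      Set (Fin k × Fin k)).ncard ≤ 4 * k :=
  (Set.ncard_le_ncard (fun _ => mem_nearSegment_of_interior_inter_convexHull_nonempty)
    (toFinite _)).trans (ncard_nearSegment_le k _ _)

/-- For any two cells `σ`, `τ` of the subdivision of an axis-parallel square into a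
`k × k` grid of congruent cells, the convex hull of `σ ∪ τ` meets the interiors of at
most `4k` cells of the grid. -/
theorem hull_of_two_cells_meets_few_cells (x₀ y₀ s : ℝ) (hs : 0 < s)
    (k : ℕ) (hk : 0 < k) (i j i' j' : Fin k) :
    ({c : Fin k × Fin k |
        (interior (cell x₀ y₀ s k c.1 c.2) ∩
          convexHull ℝ (cell x₀ y₀ s k i j ∪ cell x₀ y₀ s k i' j')).Nonempty} :
      Set (Fin k × Fin k)).ncard ≤ 4 * k :=
  hull_of_two_cells_meets_few_cells_general x₀ y₀ s k i j i' j'
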